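/- For p ∈ (0,1) and any real x < 0, the one-parameter Mittag-Leffler function satisfies M_p(x) ≤ 1, where M_p(x) = Σ_{k≥0} x^k / Γ(pk+1). -/

import Mathlib

/-!
The function `u t = M_p(-t ^ p)` solves the Volterra equation
`u t = 1 - Γ(p)⁻¹ ∫₀ᵗ (t - s) ^ (p - 1) u s ds`: integrate the series termwise, each term being a
Beta integral. For `p ≤ 1` the kernel is nonincreasing, and this forces `u > 0`. At a first point
`τ` with `u τ ≤ 0`, let `σ` be a maximum point of `u` on a short interval `[a, τ]`; comparing the
equations at `τ` and at `σ` gives `Γ(p) u σ ≤ u σ (τ - σ) ^ p / p ≤ Γ(p) u σ / 2`, although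
`u σ ≥ u a > 0`. Once `u > 0`, the integral in the equation is nonnegative, so `u ≤ 1`.
-/

/-- One-parameter Mittag-Leffler function. -/
noncomputable def mittagLeffler (p x : ℝ) : ℝ :=
  ∑' k : ℕ, x ^ k / Real.Gamma (p * k + 1)

open Real Set Filter Topology MeasureTheory

namespace Real

theorem Gamma_mul_sub_one_rpow_le_Gamma_add {x p : ℝ} (hx : 1 < x) (hp : 0 < p) :
    Gamma x * (x - 1) ^ p ≤ Gamma (x + p) := by
  have hx0 : 0 < x - 1 := by linarith
  have hslope := convexOn_log_Gamma.slope_mono_adjacent (mem_Ioi.2 hx0)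
    (mem_Ioi.2 (by linarith : 0 < x + p)) (by linarith : x - 1 < x) (by linarith : x < x + p)
  have hlog : log (Gamma x) - log (Gamma (x - 1)) = log (x - 1) := by
    rw [sub_eq_iff_eq_add, ← log_mul hx0.ne' (Gamma_pos_of_pos hx0).ne', ← Gamma_add_one hx0.ne',
      sub_add_cancel]
  simp only [Function.comp, sub_sub_cancel, div_one, add_sub_cancel_left] at hslope
  rw [hlog, le_div_iff₀ hp] at hslope
  rw [← exp_log (Gamma_pos_of_pos (by linarith : 0 < x)), rpow_def_of_pos hx0, ← exp_add,
    ← exp_log (Gamma_pos_of_pos (by linarith : 0 < x + p))]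
  exact exp_le_exp.2 (by linarith)

end Real

section

variable {p : ℝ}

theorem summable_pow_div_Gamma_mul_add_one (hp : 0 < p) (x : ℝ) :
    Summable fun k : ℕ => x ^ k / Gamma (p * k + 1) := by
  refine summable_of_ratio_norm_eventually_le (r := 1 / 2) (by norm_num) ?_
  have hgrowth : Tendsto (fun k : ℕ => (p * k) ^ p) atTop atTop :=
    (tendsto_rpow_atTop hp).comp (tendsto_natCast_atTop_atTop.const_mul_atTop hp)
  filter_upwards [hgrowth.eventually_ge_atTop (2 * |x|), eventually_gt_atTop 0] with k hk hk0
  have hpk : 0 < p * k := by positivity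
  have hΓ := Gamma_pos_of_pos (by linarith : 0 < p * k + 1)
  have hstep : Gamma (p * k + 1) * (p * k) ^ p ≤ Gamma (p * ↑(k + 1) + 1) := by
    have := Gamma_mul_sub_one_rpow_le_Gamma_add (by linarith : 1 < p * k + 1) hp
    rwa [add_sub_cancel_right, show p * k + 1 + p = p * ↑(k + 1) + 1 by push_cast; ring] at this
  simp only [norm_div, norm_pow, Real.norm_eq_abs, abs_of_pos hΓ,
    abs_of_pos (Gamma_pos_of_pos (by positivity : 0 < p * ↑(k + 1) + 1))]
  rw [div_le_iff₀ (by positivity), pow_succ]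
  calc |x| ^ k * |x| ≤ |x| ^ k * ((p * k) ^ p / 2) := by gcongr; linarith
    _ = 1 / 2 * (|x| ^ k / Gamma (p * k + 1)) * (Gamma (p * k + 1) * (p * k) ^ p) := by
      field_simp
    _ ≤ 1 / 2 * (|x| ^ k / Gamma (p * k + 1)) * Gamma (p * ↑(k + 1) + 1) := by gcongr

theorem hasSum_mittagLeffler (hp : 0 < p) (x : ℝ) :
    HasSum (fun k : ℕ => x ^ k / Gamma (p * k + 1)) (mittagLeffler p x) :=
  (summable_pow_div_Gamma_mul_add_one hp x).hasSum

@[simp]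
theorem mittagLeffler_zero (p : ℝ) : mittagLeffler p 0 = 1 := by
  rw [mittagLeffler, tsum_eq_single 0 fun k hk => by rw [zero_pow hk, zero_div]]
  simp

theorem continuous_mittagLeffler (hp : 0 < p) : Continuous (mittagLeffler p) := by
  refine continuous_iff_continuousAt.2 fun x => ?_
  have hball : ContinuousOn (mittagLeffler p) (Metric.closedBall 0 (|x| + 1)) := by
    refine continuousOn_tsum (fun k => by fun_prop)
      (summable_pow_div_Gamma_mul_add_one hp (|x| + 1)) fun k y hy => ?_
    rw [mem_closedBall_zero_iff] at hy
    rw [norm_div, norm_pow, Real.norm_of_nonneg (Gamma_pos_of_pos (by positivity)).le]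
    gcongr
  exact hball.continuousAt (Metric.closedBall_mem_nhds_of_mem (by simp))

theorem integral_sub_rpow_mul_rpow {a b t : ℝ} (ha : 0 < a) (hb : 0 < b) (ht : 0 < t) :
    ∫ s in 0..t, (t - s) ^ (a - 1) * s ^ (b - 1) =
      Gamma a * Gamma b / Gamma (a + b) * t ^ (a + b - 1) := by
  have hbeta := Complex.betaIntegral_scaled b a ht
  rw [Complex.betaIntegral_eq_Gamma_mul_div _ _ (by simpa) (by simpa)] at hbeta
  apply Complex.ofReal_injective
  rw [← intervalIntegral.integral_ofReal, intervalIntegral.integral_congr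
    (g := fun s : ℝ => (s : ℂ) ^ ((b : ℂ) - 1) * ((t : ℂ) - s) ^ ((a : ℂ) - 1)), hbeta]
  · rw [← Complex.ofReal_add, ← Complex.ofReal_one, ← Complex.ofReal_sub,
      ← Complex.ofReal_cpow ht.le]
    push_cast [← Complex.Gamma_ofReal]
    ring_nf
  · intro s hs
    rw [uIcc_of_le ht.le] at hs
    simp only [Complex.ofReal_mul]
    rw [Complex.ofReal_cpow hs.1, Complex.ofReal_cpow (sub_nonneg.2 hs.2)]
    push_cast
    ring

/-- The Riemann–Liouville integral of order `p`, without the normalising factor `Γ(p)⁻¹`. -/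
noncomputable def riemannLiouville (p : ℝ) (u : ℝ → ℝ) (t : ℝ) : ℝ :=
  ∫ s in 0..t, (t - s) ^ (p - 1) * u s

theorem intervalIntegrable_sub_rpow (hp : 0 < p) (c a b : ℝ) :
    IntervalIntegrable (fun s => (c - s) ^ (p - 1)) volume a b := by
  have hpow : IntervalIntegrable (fun s => s ^ (p - 1)) volume (c - a) (c - b) :=
    intervalIntegral.intervalIntegrable_rpow' (by linarith)
  simpa using hpow.comp_sub_left c

theorem integral_sub_rpow (hp : 0 < p) (σ τ : ℝ) :
    ∫ s in σ..τ, (τ - s) ^ (p - 1) = (τ - σ) ^ p / p := by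
  rw [intervalIntegral.integral_comp_sub_left (fun s => s ^ (p - 1)),
    integral_rpow (Or.inl (by linarith)), sub_self, sub_add_cancel, zero_rpow hp.ne', sub_zero]

theorem riemannLiouville_le {u : ℝ → ℝ} (hp0 : 0 < p) (hp1 : p ≤ 1) {σ τ M : ℝ}
    (hσ : 0 ≤ σ) (hστ : σ ≤ τ) (hu : ContinuousOn u (Icc 0 τ))
    (hnonneg : ∀ s ∈ Ioo 0 σ, 0 ≤ u s) (hM : ∀ s ∈ Icc σ τ, u s ≤ M) :
    riemannLiouville p u τ ≤ riemannLiouville p u σ + M * (τ - σ) ^ p / p := by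
  have hint : ∀ a b, a ∈ Icc 0 τ → b ∈ Icc 0 τ → ∀ c,
      IntervalIntegrable (fun s => (c - s) ^ (p - 1) * u s) volume a b := fun a b ha hb c =>
    (intervalIntegrable_sub_rpow hp0 c a b).mul_continuousOn (hu.mono (uIcc_subset_Icc ha hb))
  have hσ' : σ ∈ Icc 0 τ := ⟨hσ, hστ⟩
  have h0 : (0 : ℝ) ∈ Icc 0 τ := ⟨le_rfl, hσ.trans hστ⟩
  have hτ : τ ∈ Icc 0 τ := ⟨hσ.trans hστ, le_rfl⟩
  have hpast : ∫ s in 0..σ, (τ - s) ^ (p - 1) * u s ≤ riemannLiouville p u σ := by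
    refine intervalIntegral.integral_mono_on_of_le_Ioo hσ (hint _ _ h0 hσ' τ) (hint _ _ h0 hσ' σ)
      fun s hs => mul_le_mul_of_nonneg_right ?_ (hnonneg s hs)
    exact rpow_le_rpow_of_nonpos (by linarith [hs.2]) (by linarith) (by linarith)
  have hrecent : ∫ s in σ..τ, (τ - s) ^ (p - 1) * u s ≤ M * (τ - σ) ^ p / p := by
    rw [mul_div_assoc, ← integral_sub_rpow hp0 σ τ, ← intervalIntegral.integral_const_mul]
    refine intervalIntegral.integral_mono_on hστ (hint _ _ hσ' hτ τ)
      ((intervalIntegrable_sub_rpow hp0 τ σ τ).const_mul M) fun s hs => ?_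
    rw [mul_comm M]
    exact mul_le_mul_of_nonneg_left (hM s hs) (rpow_nonneg (by linarith [hs.2]) _)
  rw [riemannLiouville, ← intervalIntegral.integral_add_adjacent_intervals (hint _ _ h0 hσ' τ)
    (hint _ _ hσ' hτ τ)]
  linarith

theorem exists_first_nonpos {u : ℝ → ℝ} (hu : ContinuousOn u (Ici 0)) (hu0 : 0 < u 0)
    (h : ∃ t, 0 ≤ t ∧ u t ≤ 0) : ∃ τ, 0 < τ ∧ u τ ≤ 0 ∧ ∀ s ∈ Ico 0 τ, 0 < u s := by
  set S := Ici 0 ∩ u ⁻¹' Iic 0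
  have hS : IsClosed S := hu.preimage_isClosed_of_isClosed isClosed_Ici isClosed_Iic
  have hSne : S.Nonempty := h
  have hSbdd : BddBelow S := ⟨0, fun _ hs => hs.1⟩
  obtain ⟨hτ0, hτ⟩ := hS.csInf_mem hSne hSbdd
  refine ⟨sInf S, lt_of_le_of_ne hτ0 ?_, hτ, fun s hs => ?_⟩
  · rintro h0
    rw [← h0] at hτ
    exact hτ.not_gt hu0
  · by_contra! hus
    exact (csInf_le hSbdd ⟨hs.1, hus⟩).not_gt hs.2

theorem pos_of_eq_one_sub_riemannLiouville {u : ℝ → ℝ} (hp0 : 0 < p) (hp1 : p ≤ 1) {C : ℝ}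
    (hC : 0 < C) (hu : ContinuousOn u (Ici 0))
    (hvol : ∀ t, 0 ≤ t → riemannLiouville p u t = C * (1 - u t)) {t : ℝ} (ht : 0 ≤ t) :
    0 < u t := by
  have hu0 : u 0 = 1 := by
    have hvol0 := hvol 0 le_rfl
    rw [riemannLiouville, intervalIntegral.integral_same] at hvol0
    nlinarith
  by_contra! hut
  obtain ⟨τ, hτ, huτ, hpos⟩ := exists_first_nonpos hu (by linarith) ⟨t, ht, hut⟩
  have hnear : ∀ᶠ a in 𝓝[<] τ, 0 < a ∧ (τ - a) ^ p ≤ p * C / 2 := by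
    have hlim : Tendsto (fun a => (τ - a) ^ p) (𝓝 τ) (𝓝 0) := by
      have hcont : Continuous fun a => (τ - a) ^ p :=
        (continuous_const.sub continuous_id).rpow_const fun _ => Or.inr hp0.le
      simpa [zero_rpow hp0.ne'] using hcont.tendsto τ
    exact nhdsWithin_le_nhds ((lt_mem_nhds hτ).and (hlim.eventually (ge_mem_nhds (by positivity))))
  obtain ⟨a, ⟨ha0, hδ⟩, haτ⟩ := (hnear.and self_mem_nhdsWithin).exists
  obtain ⟨σ, hσ, hmax⟩ := isCompact_Icc.exists_isMaxOn (nonempty_Icc.2 haτ.le)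
    (hu.mono fun s hs => ha0.le.trans hs.1)
  have hMpos : 0 < u σ := (hpos a ⟨ha0.le, haτ⟩).trans_le (hmax (left_mem_Icc.2 haτ.le))
  have hle := riemannLiouville_le hp0 hp1 (ha0.le.trans hσ.1) hσ.2 (hu.mono fun s hs => hs.1)
    (fun s hs => (hpos s ⟨hs.1.le, hs.2.trans_le hσ.2⟩).le)
    fun s hs => hmax ⟨hσ.1.trans hs.1, hs.2⟩
  rw [hvol τ hτ.le, hvol σ (ha0.le.trans hσ.1)] at hle
  have hσδ : (τ - σ) ^ p ≤ p * C / 2 :=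
    (rpow_le_rpow (by linarith [hσ.2]) (by linarith [hσ.1]) hp0.le).trans hδ
  have hshort : u σ * (τ - σ) ^ p / p ≤ u σ * C / 2 := by
    rw [div_le_iff₀ hp0]
    nlinarith
  nlinarith

theorem mul_riemannLiouville_rpow_pow (hp : 0 < p) (c : ℝ) {t : ℝ} (ht : 0 < t) (k : ℕ) :
    c * riemannLiouville p (fun s => (c * s ^ p) ^ k / Gamma (p * k + 1)) t =
      Gamma p * ((c * t ^ p) ^ (k + 1) / Gamma (p * ↑(k + 1) + 1)) := by
  have hterm : ∀ s ∈ uIcc 0 t, (t - s) ^ (p - 1) * ((c * s ^ p) ^ k / Gamma (p * k + 1)) =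
      c ^ k / Gamma (p * k + 1) * ((t - s) ^ (p - 1) * s ^ (p * k + 1 - 1)) := by
    intro s hs
    rw [uIcc_of_le ht.le] at hs
    rw [mul_pow, ← rpow_mul_natCast hs.1, add_sub_cancel_right]
    ring
  rw [riemannLiouville, intervalIntegral.integral_congr hterm, intervalIntegral.integral_const_mul,
    integral_sub_rpow_mul_rpow hp (by positivity) ht,
    show p + (p * k + 1) - 1 = p * ↑(k + 1) by push_cast; ring,
    show p + (p * k + 1) = p * ↑(k + 1) + 1 by push_cast; ring, rpow_mul_natCast ht.le]
  have hΓk := (Gamma_pos_of_pos (by positivity : 0 < p * k + 1)).ne'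
  have hΓk' := (Gamma_pos_of_pos (by positivity : 0 < p * ↑(k + 1) + 1)).ne'
  field_simp
  ring

theorem mul_riemannLiouville_mittagLeffler (hp : 0 < p) (c : ℝ) {t : ℝ} (ht : 0 ≤ t) :
    c * riemannLiouville p (fun s => mittagLeffler p (c * s ^ p)) t =
      Gamma p * (mittagLeffler p (c * t ^ p) - 1) := by
  rcases ht.eq_or_lt with rfl | ht
  · simp [riemannLiouville, zero_rpow hp.ne', mittagLeffler_zero]
  have hΓ : ∀ k : ℕ, 0 < Gamma (p * k + 1) := fun k => Gamma_pos_of_pos (by positivity)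
  have hkernel := intervalIntegrable_sub_rpow hp t 0 t
  have hsum : HasSum
      (fun k : ℕ => riemannLiouville p (fun s => (c * s ^ p) ^ k / Gamma (p * k + 1)) t)
      (riemannLiouville p (fun s => mittagLeffler p (c * s ^ p)) t) :=
    intervalIntegral.hasSum_integral_of_dominated_convergence
      (F := fun (k : ℕ) s => (t - s) ^ (p - 1) * ((c * s ^ p) ^ k / Gamma (p * k + 1)))
      (f := fun s => (t - s) ^ (p - 1) * mittagLeffler p (c * s ^ p))
      (fun k s => |(t - s) ^ (p - 1)| * ((|c| * t ^ p) ^ k / Gamma (p * k + 1)))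
      (fun k => (hkernel.mul_continuousOn
        (by fun_prop (disch := positivity))).def'.aestronglyMeasurable) ?_ ?_ ?_ ?_
  · replace hsum := hsum.mul_left c
    simp only [mul_riemannLiouville_rpow_pow hp c ht] at hsum
    refine hsum.unique ?_
    simpa [mul_sub] using
      (hasSum_nat_add_iff' 1).2 ((hasSum_mittagLeffler hp (c * t ^ p)).mul_left (Gamma p))
  · refine fun k => ae_of_all _ fun s hs => ?_
    rw [uIoc_of_le ht.le] at hs
    rw [norm_mul, Real.norm_eq_abs, norm_div, norm_pow, norm_mul, Real.norm_of_nonneg (hΓ k).le,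
      Real.norm_eq_abs, Real.norm_of_nonneg (rpow_nonneg hs.1.le p)]
    gcongr
    exacts [mul_nonneg (abs_nonneg c) (rpow_nonneg hs.1.le p), hs.1.le, hs.2]
  · exact ae_of_all _ fun s _ => (summable_pow_div_Gamma_mul_add_one hp _).mul_left _
  · simp_rw [tsum_mul_left]
    exact hkernel.abs.mul_const _
  · exact ae_of_all _ fun s _ => (hasSum_mittagLeffler hp _).mul_left _

theorem mittagLeffler_pos {x : ℝ} (hp0 : 0 < p) (hp1 : p ≤ 1) (hx : x ≤ 0) :
    0 < mittagLeffler p x := by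
  have hvol : ∀ t, 0 ≤ t → riemannLiouville p (fun s => mittagLeffler p (-1 * s ^ p)) t =
      Gamma p * (1 - mittagLeffler p (-1 * t ^ p)) := fun t ht => by
    linarith [mul_riemannLiouville_mittagLeffler hp0 (-1) ht]
  have hu : Continuous fun s => mittagLeffler p (-1 * s ^ p) :=
    (continuous_mittagLeffler hp0).comp (continuous_const.mul (continuous_rpow_const hp0.le))
  have hxt : -1 * ((-x) ^ p⁻¹) ^ p = x := by rw [rpow_inv_rpow (neg_nonneg.2 hx) hp0.ne']; ring
  simpa only [hxt] using pos_of_eq_one_sub_riemannLiouville hp0 hp1 (Gamma_pos_of_pos hp0)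
    hu.continuousOn hvol (rpow_nonneg (neg_nonneg.2 hx) p⁻¹)

end

theorem mittagLeffler_le_one (p x : ℝ) (hp0 : 0 < p) (hp1 : p < 1) (hx : x < 0) :
    mittagLeffler p x ≤ 1 := by
  set t := (-x) ^ p⁻¹
  have ht : 0 ≤ t := rpow_nonneg (by linarith) _
  have hxt : -1 * t ^ p = x := by rw [rpow_inv_rpow (by linarith) hp0.ne']; ring
  have hvol := mul_riemannLiouville_mittagLeffler hp0 (-1) ht
  rw [hxt] at hvol
  have hRL : 0 ≤ riemannLiouville p (fun s => mittagLeffler p (-1 * s ^ p)) t :=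
    intervalIntegral.integral_nonneg ht fun s hs =>
      mul_nonneg (rpow_nonneg (by linarith [hs.2]) _)
        (mittagLeffler_pos hp0 hp1.le (by nlinarith [rpow_nonneg hs.1 p])).le
  nlinarith [Gamma_pos_of_pos hp0]
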